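/- arXiv:2604.02231 — 7 statements merged into one kernel-verified Lean document; each statement's English description precedes it below -/
import Mathlib

section
/- A tensor M ∈ R^{[2m,n]} is a T-P tensor if and only if M is both T-column sufficient and T-non-degenerate. -/
open Finset

/-- The contraction product: `(tmul M Z) i = ∑ j, M i j * Z j`. -/
def tmul {m n : ℕ} (M : (Fin m → Fin n) → (Fin m → Fin n) → ℝ)
    (Z : (Fin m → Fin n) → ℝ) : (Fin m → Fin n) → ℝ :=
  fun i => ∑ j : Fin m → Fin n, M i j * Z j

/-- Inner product of tensors. -/
def tinner {m n : ℕ} (A B : (Fin m → Fin n) → ℝ) : ℝ :=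
  ∑ i : Fin m → Fin n, A i * B i

/-- `M` is T-column sufficient. -/
def TColSuff {m n : ℕ} (M : (Fin m → Fin n) → (Fin m → Fin n) → ℝ) : Prop :=
  ∀ Z : (Fin m → Fin n) → ℝ,
    (∀ i, Z i * tmul M Z i ≤ 0) → (∀ i, Z i * tmul M Z i = 0)

/-- `M` is T-column sufficient on the nonnegative orthant. -/
def TColSuffPlus {m n : ℕ} (M : (Fin m → Fin n) → (Fin m → Fin n) → ℝ) : Prop :=
  ∀ Z : (Fin m → Fin n) → ℝ, (∀ i, 0 ≤ Z i) →
    (∀ i, Z i * tmul M Z i ≤ 0) → (∀ i, Z i * tmul M Z i = 0)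

/-- `M` is a T-P tensor. -/
def TP {m n : ℕ} (M : (Fin m → Fin n) → (Fin m → Fin n) → ℝ) : Prop :=
  ∀ Z : (Fin m → Fin n) → ℝ, Z ≠ 0 → ∃ i, 0 < Z i * tmul M Z i

/-- `M` is T-non-degenerate. -/
def TND {m n : ℕ} (M : (Fin m → Fin n) → (Fin m → Fin n) → ℝ) : Prop :=
  ∀ Z : (Fin m → Fin n) → ℝ, Z ≠ 0 → ∃ i, Z i * tmul M Z i ≠ 0

/-- `M` is T-positive semidefinite. -/
def TPSD {m n : ℕ} (M : (Fin m → Fin n) → (Fin m → Fin n) → ℝ) : Prop :=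
  ∀ Z : (Fin m → Fin n) → ℝ, 0 ≤ tinner Z (tmul M Z)

/-- `M` is T-copositive. -/
def TCopositive {m n : ℕ} (M : (Fin m → Fin n) → (Fin m → Fin n) → ℝ) : Prop :=
  ∀ Z : (Fin m → Fin n) → ℝ, (∀ i, 0 ≤ Z i) → 0 ≤ tinner Z (tmul M Z)

/-- `M` is T-semi-positive. -/
def TSemiPos {m n : ℕ} (M : (Fin m → Fin n) → (Fin m → Fin n) → ℝ) : Prop :=
  ∀ Z : (Fin m → Fin n) → ℝ, (∀ i, 0 ≤ Z i) → Z ≠ 0 →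
    ∃ i, 0 < Z i ∧ 0 ≤ tmul M Z i

/-- The solution set of the TLCP. -/
def SOL {m n : ℕ} (M : (Fin m → Fin n) → (Fin m → Fin n) → ℝ)
    (Q : (Fin m → Fin n) → ℝ) : Set ((Fin m → Fin n) → ℝ) :=
  {Z | (∀ i, 0 ≤ Z i) ∧ (∀ i, 0 ≤ tmul M Z i + Q i) ∧
    tinner Z (fun i => tmul M Z i + Q i) = 0}

@[simp]
lemma tmul_zero {m n : ℕ} (M : (Fin m → Fin n) → (Fin m → Fin n) → ℝ) : tmul M 0 = 0 := by
  ext i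
  simp [tmul]

section

variable {m n : ℕ} {M : (Fin m → Fin n) → (Fin m → Fin n) → ℝ}

lemma TP.tColSuff (h : TP M) : TColSuff M := by
  intro Z hle
  rcases eq_or_ne Z 0 with rfl | hZ
  · simp
  · obtain ⟨j, hj⟩ := h Z hZ
    exact absurd (hle j) hj.not_ge

lemma TP.tND (h : TP M) : TND M := fun Z hZ =>
  (h Z hZ).imp fun _ hj => hj.ne'

lemma TColSuff.tP_of_tND (hcs : TColSuff M) (hnd : TND M) : TP M := by
  intro Z hZ
  obtain ⟨j, hj⟩ := hnd Z hZ
  by_contra! hle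
  exact hj (hcs Z hle j)

end

theorem stmt3 {m n : ℕ} (M : (Fin m → Fin n) → (Fin m → Fin n) → ℝ) :
    TP M ↔ (TColSuff M ∧ TND M) :=
  ⟨fun h => ⟨h.tColSuff, h.tND⟩, fun ⟨hcs, hnd⟩ => hcs.tP_of_tND hnd⟩
end

section
/- Every k-th sequential principal subtensor of a T-column sufficient tensor is T-column sufficient. Precisely, if M ∈ R^{[2m,n]} is T-column sufficient and k ≤ n, then the tensor M^(k) ∈ R^{[2m,k]} defined by restricting all indices of M to {1,...,k} is T-column sufficient. -/
open Finset

section Reindex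

variable {m n m' k : ℕ} {e : (Fin m' → Fin k) → (Fin m → Fin n)}

lemma tmul_extend_zero_apply (he : Function.Injective e)
    (M : (Fin m → Fin n) → (Fin m → Fin n) → ℝ) (Z : (Fin m' → Fin k) → ℝ) (i : Fin m' → Fin k) :
    tmul M (Function.extend e Z 0) (e i) = tmul (fun i j => M (e i) (e j)) Z i :=
  (Fintype.sum_of_injective e he _ _
    (fun j hj => by rw [Function.extend_apply' _ _ _ (by simpa using hj), Pi.zero_apply, mul_zero])
    (fun j => by rw [he.extend_apply])).symm

/-- Extending a test tensor by zero off the range of `e` leaves the products `z_i (MZ)_i` unchanged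
on the range and makes them vanish elsewhere. -/
theorem TColSuff.comp_injective (he : Function.Injective e)
    {M : (Fin m → Fin n) → (Fin m → Fin n) → ℝ} (hM : TColSuff M) :
    TColSuff (fun i j => M (e i) (e j)) := by
  intro Z hZ i₀
  set Z' := Function.extend e Z 0 with hZ'_def
  have hZ'_apply (i : Fin m' → Fin k) :
      Z' (e i) * tmul M Z' (e i) = Z i * tmul (fun i j => M (e i) (e j)) Z i := by
    rw [hZ'_def, he.extend_apply, tmul_extend_zero_apply he]
  have hZ' : ∀ i', Z' i' * tmul M Z' i' ≤ 0 := by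
    intro i'
    by_cases hi' : ∃ i, e i = i'
    · obtain ⟨i, rfl⟩ := hi'
      exact (hZ'_apply i).trans_le (hZ i)
    · rw [show Z' i' = 0 from Function.extend_apply' _ _ _ hi', zero_mul]
  exact (hZ'_apply i₀).symm.trans (hM Z' hZ' (e i₀))

end Reindex

theorem stmt4 {m n k : ℕ} (hk : k ≤ n)
    (M : (Fin m → Fin n) → (Fin m → Fin n) → ℝ) (hM : TColSuff M) :
    TColSuff (fun i j : Fin m → Fin k =>
      M (fun t => Fin.castLE hk (i t)) (fun t => Fin.castLE hk (j t))) :=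
  hM.comp_injective (Fin.castLE_injective hk).comp_left
end

section
/- If M ∈ R^{[2m,n]} is T-column sufficient, then for every Q ∈ R^{[m,n]} the solution set SOL(M,Q) of the tensor linear complementarity problem is convex. -/
/-! For solutions `Z¹, Z²` with `Wᵏ = MZᵏ + Q`, complementarity `zᵏᵢ wᵏᵢ = 0` gives
`(Z¹ - Z²)ᵢ (M(Z¹ - Z²))ᵢ = -(z¹ᵢ w²ᵢ + z²ᵢ w¹ᵢ) ≤ 0` for every `i`. Column sufficiency forces
these to vanish, so all cross products `⟨Zᵏ, Wˡ⟩` are zero, and expanding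
`⟨aZ¹ + bZ², aW¹ + bW²⟩` bilinearly shows that convex combinations of solutions are solutions. -/

open Finset

open Matrix

section

variable {m n : ℕ} {M : (Fin m → Fin n) → (Fin m → Fin n) → ℝ}

lemma tmul_eq_mulVec (Z : (Fin m → Fin n) → ℝ) : tmul M Z = of M *ᵥ Z := rfl

lemma tmul_sub (Z₁ Z₂ : (Fin m → Fin n) → ℝ) : tmul M (Z₁ - Z₂) = tmul M Z₁ - tmul M Z₂ :=
  mulVec_sub _ _ _

lemma tmul_smul_add_smul_add {Q Z₁ Z₂ : (Fin m → Fin n) → ℝ} {a b : ℝ} (hab : a + b = 1) :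
    tmul M (a • Z₁ + b • Z₂) + Q = a • (tmul M Z₁ + Q) + b • (tmul M Z₂ + Q) := by
  simp only [tmul_eq_mulVec, mulVec_add, mulVec_smul]
  linear_combination (norm := module) hab.symm • Q

lemma mul_eq_zero_of_tinner_eq_zero {A B : (Fin m → Fin n) → ℝ} (hA : ∀ i, 0 ≤ A i)
    (hB : ∀ i, 0 ≤ B i) (h : tinner A B = 0) (i : Fin m → Fin n) : A i * B i = 0 :=
  (sum_eq_zero_iff_of_nonneg fun j _ => mul_nonneg (hA j) (hB j)).mp h i (mem_univ i)

/-- The "if" direction of the Li–Huang characterization. -/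
lemma convex_SOL_of_tinner_eq_zero {Q : (Fin m → Fin n) → ℝ}
    (hcross : ∀ Z₁ ∈ SOL M Q, ∀ Z₂ ∈ SOL M Q, tinner Z₁ (tmul M Z₂ + Q) = 0) :
    Convex ℝ (SOL M Q) := by
  intro Z₁ h₁ Z₂ h₂ a b ha hb hab
  have h₁₂ : Z₁ ⬝ᵥ (tmul M Z₂ + Q) = 0 := hcross Z₁ h₁ Z₂ h₂
  have h₂₁ : Z₂ ⬝ᵥ (tmul M Z₁ + Q) = 0 := hcross Z₂ h₂ Z₁ h₁
  obtain ⟨hZ₁, hW₁, hc₁ : Z₁ ⬝ᵥ (tmul M Z₁ + Q) = 0⟩ := h₁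
  obtain ⟨hZ₂, hW₂, hc₂ : Z₂ ⬝ᵥ (tmul M Z₂ + Q) = 0⟩ := h₂
  refine ⟨fun i => ?_, fun i => ?_, ?_⟩
  · exact add_nonneg (mul_nonneg ha (hZ₁ i)) (mul_nonneg hb (hZ₂ i))
  · change 0 ≤ (tmul M (a • Z₁ + b • Z₂) + Q) i
    rw [tmul_smul_add_smul_add hab]
    exact add_nonneg (mul_nonneg ha (hW₁ i)) (mul_nonneg hb (hW₂ i))
  · change (a • Z₁ + b • Z₂) ⬝ᵥ (tmul M (a • Z₁ + b • Z₂) + Q) = 0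
    rw [tmul_smul_add_smul_add hab]
    generalize tmul M Z₁ + Q = W₁ at hc₁ h₂₁ ⊢
    generalize tmul M Z₂ + Q = W₂ at hc₂ h₁₂ ⊢
    simp only [add_dotProduct, dotProduct_add, smul_dotProduct, dotProduct_smul, hc₁, hc₂, h₁₂,
      h₂₁, add_zero, smul_zero]

lemma TColSuff.tinner_eq_zero_of_mem_SOL (hM : TColSuff M) {Q Z₁ Z₂ : (Fin m → Fin n) → ℝ}
    (h₁ : Z₁ ∈ SOL M Q) (h₂ : Z₂ ∈ SOL M Q) : tinner Z₁ (tmul M Z₂ + Q) = 0 := by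
  obtain ⟨hZ₁, hW₁, hc₁⟩ := h₁
  obtain ⟨hZ₂, hW₂, hc₂⟩ := h₂
  have h₁₂ i : 0 ≤ Z₁ i * (tmul M Z₂ i + Q i) := mul_nonneg (hZ₁ i) (hW₂ i)
  have h₂₁ i : 0 ≤ Z₂ i * (tmul M Z₁ i + Q i) := mul_nonneg (hZ₂ i) (hW₁ i)
  have hform i : (Z₁ - Z₂) i * tmul M (Z₁ - Z₂) i =
      -(Z₁ i * (tmul M Z₂ i + Q i) + Z₂ i * (tmul M Z₁ i + Q i)) := by
    rw [tmul_sub, Pi.sub_apply, Pi.sub_apply]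
    linear_combination mul_eq_zero_of_tinner_eq_zero hZ₁ hW₁ hc₁ i +
      mul_eq_zero_of_tinner_eq_zero hZ₂ hW₂ hc₂ i
  have hzero := hM (Z₁ - Z₂) fun i => by linarith [hform i, h₁₂ i, h₂₁ i]
  exact sum_eq_zero fun i _ => show Z₁ i * (tmul M Z₂ i + Q i) = 0 by
    linarith [hzero i, hform i, h₁₂ i, h₂₁ i]

end

theorem stmt5 {m n : ℕ} (M : (Fin m → Fin n) → (Fin m → Fin n) → ℝ)
    (hM : TColSuff M) : ∀ Q : (Fin m → Fin n) → ℝ, Convex ℝ (SOL M Q) :=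
  fun _ => convex_SOL_of_tinner_eq_zero fun _ h₁ _ h₂ => hM.tinner_eq_zero_of_mem_SOL h₁ h₂
end

section
/- M ∈ R^{[2m,n]} is T-column sufficient if and only if SOL(M,Q) is a convex set for every Q ∈ R^{[m,n]}. -/
open Finset

/-!
A tensor in `ℝ^{[2m,n]}` acting on `ℝ^{[m,n]}` is a square matrix indexed by the finite type
`Fin m → Fin n`, so this is the matrix theorem of Cottle, Pang and Venkateswaran for an arbitrary
finite index type.

If `z₁, z₂` solve the LCP with slacks `w₁, w₂`, then
`(z₁ - z₂)ᵢ (M (z₁ - z₂))ᵢ = -(z₁ᵢ w₂ᵢ + z₂ᵢ w₁ᵢ) ≤ 0`, so column sufficiency kills the cross products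
`z₁ᵢ w₂ᵢ` and `z₂ᵢ w₁ᵢ`, and then every convex combination is complementary. Conversely, if
`zᵢ (M z)ᵢ ≤ 0` for all `i`, then `z⁺` and `z⁻` both solve the LCP with `q = -(M z⁺ ⊓ M z⁻)`; their
midpoint is positive wherever `zᵢ ≠ 0`, and complementarity there forces `(M z⁺)ᵢ = (M z⁻)ᵢ`.
-/

namespace Matrix

variable {ι : Type*} [Fintype ι]

def IsColumnSufficient (M : Matrix ι ι ℝ) : Prop :=
  ∀ z : ι → ℝ, (∀ i, z i * (M *ᵥ z) i ≤ 0) → ∀ i, z i * (M *ᵥ z) i = 0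

def lcpSolutions (M : Matrix ι ι ℝ) (q : ι → ℝ) : Set (ι → ℝ) :=
  {z | 0 ≤ z ∧ 0 ≤ M *ᵥ z + q ∧ z ⬝ᵥ (M *ᵥ z + q) = 0}

variable {M : Matrix ι ι ℝ} {q z : ι → ℝ}

theorem mem_lcpSolutions_iff :
    z ∈ M.lcpSolutions q ↔ 0 ≤ z ∧ 0 ≤ M *ᵥ z + q ∧ ∀ i, z i * (M *ᵥ z + q) i = 0 := by
  refine and_congr_right fun hz => and_congr_right fun hw => ?_
  simp only [dotProduct, Finset.sum_eq_zero_iff_of_nonneg fun i _ => mul_nonneg (hz i) (hw i),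
    Finset.mem_univ, true_implies]

theorem mul_mulVec_add_eq_zero_of_mem_lcpSolutions (hM : M.IsColumnSufficient) {z₁ z₂ : ι → ℝ}
    (h₁ : z₁ ∈ M.lcpSolutions q) (h₂ : z₂ ∈ M.lcpSolutions q) (i : ι) :
    z₁ i * (M *ᵥ z₂ + q) i = 0 := by
  obtain ⟨hz₁, hw₁, hc₁⟩ := mem_lcpSolutions_iff.1 h₁
  obtain ⟨hz₂, hw₂, hc₂⟩ := mem_lcpSolutions_iff.1 h₂
  have hcross : ∀ i, 0 ≤ z₁ i * (M *ᵥ z₂ + q) i ∧ 0 ≤ z₂ i * (M *ᵥ z₁ + q) i :=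
    fun i => ⟨mul_nonneg (hz₁ i) (hw₂ i), mul_nonneg (hz₂ i) (hw₁ i)⟩
  have hdiff : ∀ i, (z₁ - z₂) i * (M *ᵥ (z₁ - z₂)) i =
      -(z₁ i * (M *ᵥ z₂ + q) i + z₂ i * (M *ᵥ z₁ + q) i) := by
    intro i
    simp only [mulVec_sub, Pi.sub_apply, Pi.add_apply] at hc₁ hc₂ ⊢
    linear_combination hc₁ i + hc₂ i
  have hzero := hM (z₁ - z₂) fun i => by linarith [hdiff i, hcross i]
  linarith [hzero i, hdiff i, hcross i]

theorem convex_lcpSolutions (hM : M.IsColumnSufficient) (q : ι → ℝ) :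
    Convex ℝ (M.lcpSolutions q) := by
  intro z₁ h₁ z₂ h₂ a b ha hb hab
  obtain ⟨hz₁, hw₁, hc₁⟩ := mem_lcpSolutions_iff.1 h₁
  obtain ⟨hz₂, hw₂, hc₂⟩ := mem_lcpSolutions_iff.1 h₂
  have h₁₂ := mul_mulVec_add_eq_zero_of_mem_lcpSolutions hM h₁ h₂
  have h₂₁ := mul_mulVec_add_eq_zero_of_mem_lcpSolutions hM h₂ h₁
  have hw : M *ᵥ (a • z₁ + b • z₂) + q = a • (M *ᵥ z₁ + q) + b • (M *ᵥ z₂ + q) := by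
    rw [mulVec_add, mulVec_smul, mulVec_smul]
    linear_combination (norm := module) (-hab) • q
  rw [mem_lcpSolutions_iff, hw]
  refine ⟨add_nonneg (smul_nonneg ha hz₁) (smul_nonneg hb hz₂),
    add_nonneg (smul_nonneg ha hw₁) (smul_nonneg hb hw₂), fun i => ?_⟩
  simp only [Pi.add_apply, Pi.smul_apply, smul_eq_mul] at hc₁ hc₂ h₁₂ h₂₁ ⊢
  linear_combination a ^ 2 * hc₁ i + a * b * h₁₂ i + a * b * h₂₁ i + b ^ 2 * hc₂ i

theorem posPart_mem_lcpSolutions (hz : ∀ i, z i * (M *ᵥ z) i ≤ 0) :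
    z⁺ ∈ M.lcpSolutions (-(M *ᵥ z⁺ ⊓ M *ᵥ z⁻)) := by
  rw [mem_lcpSolutions_iff, ← sub_eq_add_neg]
  refine ⟨posPart_nonneg z, sub_nonneg.2 inf_le_left, fun i => ?_⟩
  rcases le_or_gt (z i) 0 with hneg | hpos
  · simp [Pi.posPart_apply, posPart_eq_zero.2 hneg]
  · have hMz : (M *ᵥ z) i ≤ 0 := nonpos_of_mul_nonpos_right (hz i) hpos
    rw [← posPart_sub_negPart z, mulVec_sub, Pi.sub_apply, sub_nonpos] at hMz
    simp [inf_eq_left.2 hMz]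

theorem negPart_mem_lcpSolutions (hz : ∀ i, z i * (M *ᵥ z) i ≤ 0) :
    z⁻ ∈ M.lcpSolutions (-(M *ᵥ z⁺ ⊓ M *ᵥ z⁻)) := by
  have h := posPart_mem_lcpSolutions (M := M) (z := -z) fun i => by simpa [mulVec_neg] using hz i
  rwa [posPart_neg, negPart_neg, inf_comm] at h

theorem isColumnSufficient_of_forall_convex_lcpSolutions (h : ∀ q, Convex ℝ (M.lcpSolutions q)) :
    M.IsColumnSufficient := by
  intro z hz i
  have hmid := h _ (posPart_mem_lcpSolutions hz) (negPart_mem_lcpSolutions hz)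
    (half_pos one_pos).le (half_pos one_pos).le (add_halves 1)
  obtain ⟨-, -, hc⟩ := mem_lcpSolutions_iff.1 hmid
  rcases eq_or_ne (z i) 0 with h0 | h0
  · simp [h0]
  have hpos : 0 < ((1 / 2 : ℝ) • z⁺ + (1 / 2 : ℝ) • z⁻) i := by
    simp only [Pi.add_apply, Pi.smul_apply, smul_eq_mul, Pi.posPart_apply, Pi.negPart_apply,
      ← mul_add, posPart_add_negPart]
    positivity
  have hslack := (mul_eq_zero.1 (hc i)).resolve_left hpos.ne'
  simp only [mulVec_add, mulVec_smul, Pi.add_apply, Pi.smul_apply, smul_eq_mul, Pi.neg_apply,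
    Pi.inf_apply] at hslack
  have heq : (M *ᵥ z⁺) i = (M *ᵥ z⁻) i := by
    linarith [min_le_left ((M *ᵥ z⁺) i) ((M *ᵥ z⁻) i), min_le_right ((M *ᵥ z⁺) i) ((M *ᵥ z⁻) i)]
  rw [← posPart_sub_negPart z, mulVec_sub, Pi.sub_apply (M *ᵥ _), heq, sub_self, mul_zero]

theorem isColumnSufficient_iff_forall_convex_lcpSolutions :
    M.IsColumnSufficient ↔ ∀ q, Convex ℝ (M.lcpSolutions q) :=
  ⟨fun hM => convex_lcpSolutions hM, isColumnSufficient_of_forall_convex_lcpSolutions⟩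

end Matrix

theorem stmt7 {m n : ℕ} (M : (Fin m → Fin n) → (Fin m → Fin n) → ℝ) :
    TColSuff M ↔ ∀ Q : (Fin m → Fin n) → ℝ, Convex ℝ (SOL M Q) :=
  Matrix.isColumnSufficient_iff_forall_convex_lcpSolutions (M := M)
end

section
/- If M ∈ R^{[2m,n]} is T-column sufficient on the nonnegative orthant R^{[m,n]}_+, then M is T-semi-positive: for every nonzero entrywise nonnegative tensor Z there exist indices i₁,...,i_m such that z_{i₁...i_m} > 0 and (MZ)_{i₁...i_m} ≥ 0. -/
open Finset

theorem mul_nonpos_of_nonneg_of_pos_imp_nonpos {α : Type*} [MulZeroClass α] [PartialOrder α]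
    [PosMulMono α] {a b : α} (ha : 0 ≤ a) (hb : 0 < a → b ≤ 0) : a * b ≤ 0 := by
  rcases ha.eq_or_lt with rfl | ha_pos
  · rw [zero_mul]
  · exact mul_nonpos_of_nonneg_of_nonpos ha (hb ha_pos)

theorem stmt9 {m n : ℕ} (M : (Fin m → Fin n) → (Fin m → Fin n) → ℝ)
    (hM : TColSuffPlus M) : TSemiPos M := by
  intro Z hZ hZ_ne
  by_contra! hneg
  have hsign : ∀ i, Z i * tmul M Z i ≤ 0 := fun i =>
    mul_nonpos_of_nonneg_of_pos_imp_nonpos (hZ i) fun hi => (hneg i hi).le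
  obtain ⟨i, hi⟩ := (Pi.lt_def.mp (lt_of_le_of_ne hZ hZ_ne.symm)).2
  exact (mul_neg_of_pos_of_neg hi (hneg i hi)).ne (hM Z hZ hsign i)
end

section
/- If M ∈ R^{[2m,n]} is T-column sufficient on R^{[m,n]}_+, then for every entrywise positive Q ∈ R^{[m,n]} the tensor linear complementarity problem TLCP(M,Q) has a unique solution, namely Z = 0. -/
open Finset

/-! If `Z ≥ 0`, `Z ≠ 0` had `(MZ)_i < 0` wherever `z_i > 0`, then every `z_i (MZ)_i ≤ 0` with some
strictly negative, contradicting column sufficiency; so `M` is semi-positive. A nonzero solution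
of TLCP(M, Q) with `Q > 0` would then have an index with `z_i ((MZ)_i + q_i) > 0`, which
complementarity forbids. -/

section

variable {m n : ℕ} {M : (Fin m → Fin n) → (Fin m → Fin n) → ℝ} {Q Z : (Fin m → Fin n) → ℝ}

theorem TColSuffPlus.tSemiPos (hM : TColSuffPlus M) : TSemiPos M := by
  intro Z hZ hZ0
  by_contra! hneg
  have hle : ∀ i, Z i * tmul M Z i ≤ 0 := fun i => by
    rcases (hZ i).eq_or_lt with hi | hi
    · simp [← hi]
    · exact mul_nonpos_of_nonneg_of_nonpos hi.le (hneg i hi).le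
  obtain ⟨i, hi⟩ := Function.ne_iff.mp hZ0
  have hpos : 0 < Z i := (hZ i).lt_of_ne' hi
  exact (mul_neg_of_pos_of_neg hpos (hneg i hpos)).ne (hM Z hZ hle i)

theorem zero_mem_SOL (hQ : ∀ i, 0 ≤ Q i) : 0 ∈ SOL M Q :=
  ⟨fun _ => le_rfl, fun i => by simpa [tmul] using hQ i, by simp [tinner]⟩

theorem mul_eq_zero_of_mem_SOL (hZ : Z ∈ SOL M Q) (i : Fin m → Fin n) :
    Z i * (tmul M Z i + Q i) = 0 := by
  obtain ⟨hZ, hW, hI⟩ := hZ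
  exact (sum_eq_zero_iff_of_nonneg fun j _ => mul_nonneg (hZ j) (hW j)).mp hI i (mem_univ i)

theorem TSemiPos.SOL_eq_singleton_zero (hM : TSemiPos M) (hQ : ∀ i, 0 < Q i) : SOL M Q = {0} := by
  refine Set.eq_singleton_iff_unique_mem.mpr ⟨zero_mem_SOL fun i => (hQ i).le, fun Z hZ => ?_⟩
  by_contra hZ0
  obtain ⟨i, hi, hMZ⟩ := hM Z hZ.1 hZ0
  exact (mul_pos hi (add_pos_of_nonneg_of_pos hMZ (hQ i))).ne' (mul_eq_zero_of_mem_SOL hZ i)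

end

theorem stmt10 {m n : ℕ} (M : (Fin m → Fin n) → (Fin m → Fin n) → ℝ)
    (hM : TColSuffPlus M) :
    ∀ Q : (Fin m → Fin n) → ℝ, (∀ i, 0 < Q i) → SOL M Q = {0} :=
  fun _ hQ => hM.tSemiPos.SOL_eq_singleton_zero hQ
end

section
/- Let M ∈ R^{[4,2]} have entries m_{2111} = m_{2222} = 1, m_{1121} = −2, and all other entries zero. Then M is T-column sufficient but not T-positive semidefinite. -/
/-!
With `Z = (z_{ij})` one has `MZ = [[-2 z₂₁, 0], [z₁₁, z₂₂]]`. If every `z_{ij} (MZ)_{ij} ≤ 0`, the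
entries `(1,1)` and `(2,1)` give `-2 z₁₁ z₂₁ ≤ 0` and `z₁₁ z₂₁ ≤ 0`, so `z₁₁ z₂₁ = 0`, and the entry
`(2,2)` gives `z₂₂² ≤ 0`; hence all the products vanish. On the other hand
`⟨Z, MZ⟩ = -z₁₁ z₂₁ + z₂₂²` equals `-1` at `z₁₁ = z₂₁ = 1`, `z₁₂ = z₂₂ = 0`.
-/

open Finset

theorem Fintype.sum_fin_two_arrow {α β : Type*} [Fintype α] [AddCommMonoid β]
    (f : (Fin 2 → α) → β) : ∑ x, f x = ∑ a, ∑ b, f ![a, b] := by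
  rw [← (finTwoArrowEquiv α).symm.sum_comp, Fintype.sum_prod_type]
  rfl

theorem forall_fin_two_arrow {α : Type*} {P : (Fin 2 → α) → Prop} :
    (∀ x, P x) ↔ ∀ a b, P ![a, b] :=
  (finTwoArrowEquiv α).symm.forall_congr_right.symm.trans Prod.forall

def exampleTensor (i j : Fin 2 → Fin 2) : ℝ :=
  if i 0 = 1 ∧ i 1 = 0 ∧ j 0 = 0 ∧ j 1 = 0 then (1 : ℝ)
  else if i 0 = 1 ∧ i 1 = 1 ∧ j 0 = 1 ∧ j 1 = 1 then 1
  else if i 0 = 0 ∧ i 1 = 0 ∧ j 0 = 1 ∧ j 1 = 0 then -2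
  else 0

-- Fin is 0-based: entry `(a, b)` is the paper's `(MZ)_{a+1,b+1}`.
theorem tmul_exampleTensor (Z : (Fin 2 → Fin 2) → ℝ) (a b : Fin 2) :
    tmul exampleTensor Z ![a, b] = ![![-2 * Z ![1, 0], 0], ![Z ![0, 0], Z ![1, 1]]] a b := by
  fin_cases a <;> fin_cases b <;>
    simp [tmul, exampleTensor, Fintype.sum_fin_two_arrow, Fin.sum_univ_two]

theorem tColSuff_exampleTensor : TColSuff exampleTensor := by
  intro Z hle
  simp only [forall_fin_two_arrow, Fin.forall_fin_two, tmul_exampleTensor, Matrix.cons_val_zero,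
    Matrix.cons_val_one] at hle ⊢
  obtain ⟨⟨h00, -⟩, h10, h11⟩ := hle
  have hprod : Z ![0, 0] * Z ![1, 0] = 0 := by nlinarith
  have hz11 : Z ![1, 1] = 0 := mul_self_eq_zero.mp (le_antisymm h11 (mul_self_nonneg _))
  exact ⟨⟨by linear_combination -2 * hprod, mul_zero _⟩, by linear_combination hprod,
    by rw [hz11, mul_zero]⟩

theorem tinner_exampleTensor (Z : (Fin 2 → Fin 2) → ℝ) :
    tinner Z (tmul exampleTensor Z) = -(Z ![0, 0] * Z ![1, 0]) + Z ![1, 1] ^ 2 := by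
  simp only [tinner, Fintype.sum_fin_two_arrow, Fin.sum_univ_two, tmul_exampleTensor,
    Matrix.cons_val_zero, Matrix.cons_val_one]
  ring

theorem not_tPSD_exampleTensor : ¬ TPSD exampleTensor := by
  intro h
  have := h fun j => if j 1 = 0 then 1 else 0
  norm_num [tinner_exampleTensor] at this

theorem stmt17 (M : (Fin 2 → Fin 2) → (Fin 2 → Fin 2) → ℝ)
    (hM : ∀ i j : Fin 2 → Fin 2, M i j =
      if i 0 = 1 ∧ i 1 = 0 ∧ j 0 = 0 ∧ j 1 = 0 then (1 : ℝ)
      else if i 0 = 1 ∧ i 1 = 1 ∧ j 0 = 1 ∧ j 1 = 1 then 1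
      else if i 0 = 0 ∧ i 1 = 0 ∧ j 0 = 1 ∧ j 1 = 0 then -2
      else 0) :
    TColSuff M ∧ ¬ TPSD M := by
  obtain rfl : M = exampleTensor := funext₂ hM
  exact ⟨tColSuff_exampleTensor, not_tPSD_exampleTensor⟩
end
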